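/- arXiv:1301.3991 — 2 statements merged into one kernel-verified Lean document; each statement's English description precedes it below -/
import Mathlib

section
/- Let P be a parametric system in K[U][X] with Wu's decomposition {C_1,...,C_m}; let S be the set of non-contradictory ascending chains among them and CS the set of contradictory ones. Then for any a ∈ K̄^d outside ⋃_{C ∈ CS} V^U(C), we have V(P(a)) = ⋃_{C ∈ S} V(C(a) \ I_C(a)). -/
open MvPolynomial

noncomputable section

variable {K : Type*} [Field K] {d n : ℕ}

/-- Specialization of parameters: `K[U][X] → K̄[X]` substituting `a` for `U`. -/
def specAt (a : Fin d → AlgebraicClosure K) :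
    MvPolynomial (Fin n) (MvPolynomial (Fin d) K) →+*
      MvPolynomial (Fin n) (AlgebraicClosure K) :=
  MvPolynomial.map ((MvPolynomial.aeval a).toRingHom)

/-- Common zero set in `K̄ⁿ` of the specializations at `a` of a set of polynomials. -/
def zeroSetAt (a : Fin d → AlgebraicClosure K)
    (S : Set (MvPolynomial (Fin n) (MvPolynomial (Fin d) K))) :
    Set (Fin n → AlgebraicClosure K) :=
  {x | ∀ f ∈ S, MvPolynomial.eval x (specAt a f) = 0}

variable {A : Type*} [CommRing A]

/-- The main (largest) variable of a multivariate polynomial (defaults to `0`). -/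
def mainVar [NeZero n] (F : MvPolynomial (Fin n) A) : Fin n := WithBot.unbotD 0 F.vars.max

/-- The initial of `F`: its leading coefficient w.r.t. its main variable. -/
def initial [NeZero n] (F : MvPolynomial (Fin n) A) : MvPolynomial (Fin n) A :=
  ∑ m ∈ F.support.filter (fun m => m (mainVar F) = F.degreeOf (mainVar F)),
    MvPolynomial.monomial (m - Finsupp.single (mainVar F) (F.degreeOf (mainVar F))) (F.coeff m)

/-- `F` viewed as a univariate polynomial in the variable `j`. -/
def toUniv (j : Fin n) (F : MvPolynomial (Fin n) A) :
    Polynomial (MvPolynomial (Fin n) A) :=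
  ∑ m ∈ F.support,
    Polynomial.monomial (m j) (MvPolynomial.monomial (m - Finsupp.single j (m j)) (F.coeff m))

/-- The Sylvester matrix of two univariate polynomials. -/
def sylvester (f g : Polynomial A) :
    Matrix (Fin (f.natDegree + g.natDegree)) (Fin (f.natDegree + g.natDegree)) A :=
  fun i j =>
    if (i : ℕ) < g.natDegree then
      (if (i : ℕ) ≤ (j : ℕ) ∧ (j : ℕ) ≤ (i : ℕ) + f.natDegree then
        f.coeff (f.natDegree + i - j) else 0)
    else
      (if (i : ℕ) - g.natDegree ≤ (j : ℕ) ∧ (j : ℕ) ≤ ((i : ℕ) - g.natDegree) + g.natDegree then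
        g.coeff (g.natDegree + ((i : ℕ) - g.natDegree) - j) else 0)

/-- The resultant of two univariate polynomials (Sylvester determinant). -/
def resultant (f g : Polynomial A) : A := (sylvester f g).det

/-- `res(F, P)`: resultant w.r.t. the main variable of `P`. -/
def res1 [NeZero n] (F P : MvPolynomial (Fin n) A) : MvPolynomial (Fin n) A :=
  resultant (toUniv (mainVar P) F) (toUniv (mainVar P) P)

/-- Successive resultant of `F` w.r.t. the list `l` of polynomials. -/
def sres [NeZero n] (F : MvPolynomial (Fin n) A) (l : List (MvPolynomial (Fin n) A)) :
    MvPolynomial (Fin n) A :=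
  l.foldl res1 F

/-- A triangular set: the main variables are strictly increasing. -/
def IsTriangular [NeZero n] {r : ℕ} (T : Fin r → MvPolynomial (Fin n) A) : Prop :=
  (∀ i, (T i).vars.Nonempty) ∧ StrictMono (fun i => mainVar (T i))

/-- A regular chain. -/
def IsRegularChain [NeZero n] {r : ℕ} (T : Fin r → MvPolynomial (Fin n) A) : Prop :=
  IsTriangular T ∧ (∀ i : Fin r, (i : ℕ) = 0 → initial (T i) ≠ 0) ∧
    ∀ i : Fin r, 0 < (i : ℕ) →
      sres (initial (T i)) ((List.ofFn T).take i).reverse ≠ 0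
/-- A contradictory ascending chain: a singleton consisting of a nonzero element of `K[U]`. -/
def Contradictory [NeZero n] (C : Finset (MvPolynomial (Fin n) (MvPolynomial (Fin d) K))) : Prop :=
  ∃ b : MvPolynomial (Fin d) K, b ≠ 0 ∧ C = {MvPolynomial.C b}

/-- `C` is a characteristic set of the system `P`: `C ⊆ ⟨P⟩` and every `p ∈ P` pseudo-reduces to
zero modulo `C` (encoded via the pseudo-division identity). -/
def IsCharSet [NeZero n] (P : Set (MvPolynomial (Fin n) (MvPolynomial (Fin d) K)))
    (C : Finset (MvPolynomial (Fin n) (MvPolynomial (Fin d) K))) : Prop :=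
  (C : Set (MvPolynomial (Fin n) (MvPolynomial (Fin d) K))) ⊆
      (Ideal.span P : Set (MvPolynomial (Fin n) (MvPolynomial (Fin d) K))) ∧
    ∀ p ∈ P, ∃ k : MvPolynomial (Fin n) (MvPolynomial (Fin d) K) → ℕ,
      (∏ c ∈ C, initial c ^ k c) * p ∈
        Ideal.span (C : Set (MvPolynomial (Fin n) (MvPolynomial (Fin d) K)))

/-- `IsWuDecomp P D` : `D` is a Wu's (characteristic set) decomposition of the system `P`,
obtained by the recursive branching of Wu's well-ordering principle. -/
inductive IsWuDecomp [NeZero n] :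
    Set (MvPolynomial (Fin n) (MvPolynomial (Fin d) K)) →
      Set (Finset (MvPolynomial (Fin n) (MvPolynomial (Fin d) K))) → Prop
  | contra (P : Set (MvPolynomial (Fin n) (MvPolynomial (Fin d) K)))
      (b : MvPolynomial (Fin d) K) (hb : b ≠ 0)
      (hmem : MvPolynomial.C b ∈ Ideal.span P) :
      IsWuDecomp P {({MvPolynomial.C b} : Finset (MvPolynomial (Fin n) (MvPolynomial (Fin d) K)))}
  | node (P : Set (MvPolynomial (Fin n) (MvPolynomial (Fin d) K)))
      (C : Finset (MvPolynomial (Fin n) (MvPolynomial (Fin d) K)))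
      (hC : IsCharSet P C) (hnc : ¬ Contradictory C)
      (D : MvPolynomial (Fin n) (MvPolynomial (Fin d) K) →
        Set (Finset (MvPolynomial (Fin n) (MvPolynomial (Fin d) K))))
      (hD : ∀ c ∈ C, IsWuDecomp (P ∪ ↑C ∪ {initial c}) (D c)) :
      IsWuDecomp P ({C} ∪ ⋃ c ∈ C, D c)

/-!
For a characteristic set `C` of `P` one has `V(P) ⊆ V(C)` because `C ⊆ ⟨P⟩`, and
`V(C) \ V(I_C) ⊆ V(P)` because every `p ∈ P` pseudo-reduces to zero modulo `C`. Since `K̄` is a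
domain, `V(I_C) = ⋃_{c ∈ C} V(I_c)`, so splitting `V(P)` along `V(I_C)` gives
`V(P) = (V(C) \ V(I_C)) ∪ ⋃_{c ∈ C} V(P ∪ C ∪ {I_c})`. Induction along the branching that
produces the decomposition unfolds the second part. At a contradictory leaf some nonzero
`b ∈ K[U]` lies in `⟨P⟩`, and `b(a) ≠ 0` makes `V(P(a))` empty.
-/

section ZeroSet

variable {a : Fin d → AlgebraicClosure K}
  {S T : Set (MvPolynomial (Fin n) (MvPolynomial (Fin d) K))}

@[simp]
lemma mem_zeroSetAt_singleton {f : MvPolynomial (Fin n) (MvPolynomial (Fin d) K)}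
    {x : Fin n → AlgebraicClosure K} :
    x ∈ zeroSetAt a {f} ↔ MvPolynomial.eval x (specAt a f) = 0 := by
  simp [zeroSetAt]

lemma zeroSetAt_union : zeroSetAt a (S ∪ T) = zeroSetAt a S ∩ zeroSetAt a T := by
  ext x
  simp only [zeroSetAt, Set.mem_union, Set.mem_ofPred_eq, Set.mem_inter_iff]
  exact ⟨fun h => ⟨fun f hf => h f (.inl hf), fun f hf => h f (.inr hf)⟩,
    fun h f hf => hf.elim (h.1 f) (h.2 f)⟩

lemma zeroSetAt_anti (h : S ⊆ T) : zeroSetAt a T ⊆ zeroSetAt a S :=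
  fun _ hx f hf => hx f (h hf)

lemma zeroSetAt_span : zeroSetAt a (Ideal.span S : Set _) = zeroSetAt a S := by
  refine (zeroSetAt_anti Ideal.subset_span).antisymm fun x hx f hf => ?_
  have hker : Ideal.span S ≤ RingHom.ker ((MvPolynomial.eval x).comp (specAt a)) :=
    Ideal.span_le.mpr fun g hg => hx g hg
  exact hker hf

lemma zeroSetAt_prod_singleton {ι : Type*} (s : Finset ι)
    (f : ι → MvPolynomial (Fin n) (MvPolynomial (Fin d) K)) :
    zeroSetAt a {∏ i ∈ s, f i} = ⋃ i ∈ s, zeroSetAt a {f i} := by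
  ext x
  simp [map_prod, Finset.prod_eq_zero_iff]

lemma specAt_C (b : MvPolynomial (Fin d) K) :
    specAt (n := n) a (MvPolynomial.C b) = MvPolynomial.C (MvPolynomial.aeval a b) :=
  MvPolynomial.map_C _ _

lemma zeroSetAt_eq_empty_of_C_mem_span {b : MvPolynomial (Fin d) K}
    (hb : MvPolynomial.C b ∈ Ideal.span S) (hab : MvPolynomial.aeval a b ≠ 0) :
    zeroSetAt a S = ∅ := by
  refine Set.eq_empty_of_forall_notMem fun x hx => hab ?_
  rw [← zeroSetAt_span] at hx
  have hCb := hx _ hb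
  rwa [specAt_C, MvPolynomial.eval_C] at hCb

end ZeroSet

section CharSet

variable [NeZero n] {a : Fin d → AlgebraicClosure K}
  {P : Set (MvPolynomial (Fin n) (MvPolynomial (Fin d) K))}
  {C : Finset (MvPolynomial (Fin n) (MvPolynomial (Fin d) K))}

lemma IsCharSet.zeroSetAt_subset (hC : IsCharSet P C) :
    zeroSetAt a P ⊆ zeroSetAt a (C : Set _) :=
  zeroSetAt_span (S := P) ▸ zeroSetAt_anti hC.1

lemma IsCharSet.zeroSetAt_diff_subset (hC : IsCharSet P C) :
    zeroSetAt a (C : Set _) \ zeroSetAt a {∏ c ∈ C, initial c} ⊆ zeroSetAt a P := by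
  rintro x ⟨hxC, hxI⟩ p hp
  obtain ⟨k, hk⟩ := hC.2 p hp
  rw [← zeroSetAt_span] at hxC
  have hprod := hxC _ hk
  rw [mem_zeroSetAt_singleton, map_prod, map_prod, Finset.prod_eq_zero_iff] at hxI
  simp only [map_mul, map_prod, map_pow, mul_eq_zero, Finset.prod_eq_zero_iff] at hprod
  exact hprod.resolve_left fun ⟨c, hc, hc0⟩ => hxI ⟨c, hc, pow_eq_zero_iff'.mp hc0 |>.1⟩

lemma IsCharSet.zeroSetAt_eq (hC : IsCharSet P C) :
    zeroSetAt a P = (zeroSetAt a (C : Set _) \ zeroSetAt a {∏ c ∈ C, initial c}) ∪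
      ⋃ c ∈ C, zeroSetAt a (P ∪ C ∪ {initial c}) := by
  have hPC : zeroSetAt a P = zeroSetAt a P ∩ zeroSetAt a (C : Set _) :=
    (Set.inter_eq_left.mpr hC.zeroSetAt_subset).symm
  have hdiff : zeroSetAt a P \ zeroSetAt a {∏ c ∈ C, initial c} =
      zeroSetAt a (C : Set _) \ zeroSetAt a {∏ c ∈ C, initial c} :=
    subset_antisymm (fun _ hx => ⟨hC.zeroSetAt_subset hx.1, hx.2⟩)
      fun _ hx => ⟨hC.zeroSetAt_diff_subset hx, hx.2⟩
  simp only [zeroSetAt_union, ← Set.inter_iUnion₂, ← zeroSetAt_prod_singleton, ← hPC, ← hdiff,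
    Set.sdiff_union_inter]

end CharSet

theorem stmt8_general [NeZero n]
    (P : Set (MvPolynomial (Fin n) (MvPolynomial (Fin d) K)))
    (D : Set (Finset (MvPolynomial (Fin n) (MvPolynomial (Fin d) K))))
    (hD : IsWuDecomp P D)
    (a : Fin d → AlgebraicClosure K)
    (ha : ∀ C ∈ D, ∀ b : MvPolynomial (Fin d) K, b ≠ 0 →
      C = {MvPolynomial.C b} → MvPolynomial.aeval a b ≠ 0) :
    zeroSetAt a P =
      ⋃ C ∈ {C ∈ D | ¬ Contradictory C},
        (zeroSetAt a (C : Set (MvPolynomial (Fin n) (MvPolynomial (Fin d) K))) \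
          zeroSetAt a {∏ c ∈ C, initial c}) := by
  induction hD with
  | contra P b hb hmem =>
    have hcontra : Contradictory ({MvPolynomial.C b} :
        Finset (MvPolynomial (Fin n) (MvPolynomial (Fin d) K))) := ⟨b, hb, rfl⟩
    rw [zeroSetAt_eq_empty_of_C_mem_span hmem (ha _ rfl b hb rfl),
      Set.sep_eq_empty_iff_mem_false.mpr fun C' hC' => not_not.mpr (hC' ▸ hcontra),
      Set.biUnion_empty]
  | node P C hC hnc D _ ih =>
    have ih' := fun c hc => ih c hc fun C' hC' => ha C' (.inr (Set.mem_biUnion hc hC'))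
    rw [hC.zeroSetAt_eq, Set.iUnion₂_congr ih']
    ext x
    simp only [Set.mem_union, Set.mem_iUnion, Set.mem_ofPred_eq, Set.mem_singleton_iff]
    constructor
    · rintro (hx | ⟨c, hc, C', ⟨hC', hnc'⟩, hx⟩)
      · exact ⟨C, ⟨.inl rfl, hnc⟩, hx⟩
      · exact ⟨C', ⟨.inr ⟨c, hc, hC'⟩, hnc'⟩, hx⟩
    · rintro ⟨C', ⟨rfl | ⟨c, hc, hC'⟩, hnc'⟩, hx⟩
      · exact .inl hx
      · exact .inr ⟨c, hc, C', ⟨hC', hnc'⟩, hx⟩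

/-- Corollary wudecom: If `{C_1,...,C_m}` is a Wu's decomposition of `P`, then for
every parameter value `a ∈ K̄^d` avoiding the zero sets `V^U(C)` of all contradictory chains `C`,
`V(P(a)) = ⋃_{C non-contradictory} (V(C(a)) \ V(I_C(a)))`. -/
theorem stmt8 [NeZero n]
    (P : Set (MvPolynomial (Fin n) (MvPolynomial (Fin d) K))) (hPfin : P.Finite)
    (D : Set (Finset (MvPolynomial (Fin n) (MvPolynomial (Fin d) K))))
    (hD : IsWuDecomp P D)
    (a : Fin d → AlgebraicClosure K)
    (ha : ∀ C ∈ D, ∀ b : MvPolynomial (Fin d) K, b ≠ 0 →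
      C = {MvPolynomial.C b} → MvPolynomial.aeval a b ≠ 0) :
    zeroSetAt a P =
      ⋃ C ∈ {C ∈ D | ¬ Contradictory C},
        (zeroSetAt a (C : Set (MvPolynomial (Fin n) (MvPolynomial (Fin d) K))) \
          zeroSetAt a {∏ c ∈ C, initial c}) :=
  stmt8_general P D hD a ha

end
end

section
/- Let T = {T_1,...,T_r} be a triangular set in K[U][X] and F ∈ K[U][X]. If res(F, T) ≠ 0 in K[U][X], then F does not vanish identically on any irreducible component of V_{K̄(U)}(sat(T)) — in particular, F is not in the saturated ideal sat(T) = {G : I_T^s·G ∈ ⟨T⟩ for some s ≥ 0} when T is a regular chain. -/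
open MvPolynomial

noncomputable section

variable {K : Type*} [Field K] {d n : ℕ}

variable {A : Type*} [CommRing A]

/-!
Each `res1 F P` lies in the ideal `⟨F, P⟩` (Sylvester/Cramer) and involves neither the main
variable of `P` nor any variable outside `F` and `P`. Hence `sres F l ∈ ⟨F, l⟩`, and for a
triangular set `sres F T` contains none of the main variables of `T`.

Over an algebraic closure `Ω` of `Frac(K[U][X])`, start from the generic point `v ↦ X v` and
solve `T₁ = 0, …, T_r = 0` by changing only the main variables, one at a time. At step `k`
the initial `I_{T_k}` does not vanish: `sres(I_{T_k}, T_{k-1}, …, T₁)` is nonzero and free of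
main variables, so it keeps its nonzero generic value, yet it lies in
`⟨I_{T_k}, T₁, …, T_{k-1}⟩`. The same argument applied to `sres F T` shows that `F` does not
vanish at the resulting point, while every `T_i` does and `I_T` does not; so `I_T^s F ∉ ⟨T⟩`.
-/

open scoped Matrix

section toUniv

theorem eval_X_toUniv (j : Fin n) (F : MvPolynomial (Fin n) A) :
    (toUniv j F).eval (X j) = F := by
  rw [toUniv, Polynomial.eval_finsetSum]
  conv_rhs => rw [F.as_sum]
  refine Finset.sum_congr rfl fun m _ => ?_
  rw [Polynomial.eval_monomial, X_pow_eq_monomial, monomial_mul, mul_one,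
    tsub_add_cancel_of_le (Finsupp.single_le_iff.mpr le_rfl)]

theorem coeff_toUniv (j : Fin n) (F : MvPolynomial (Fin n) A) (k : ℕ) :
    (toUniv j F).coeff k =
      ∑ m ∈ F.support.filter (fun m => m j = k), monomial (m - Finsupp.single j k) (F.coeff m) := by
  classical
  rw [toUniv, Polynomial.finsetSum_coeff, Finset.sum_filter]
  refine Finset.sum_congr rfl fun m _ => ?_
  rw [Polynomial.coeff_monomial]
  split_ifs with h
  · rw [h]
  · rfl

theorem vars_coeff_toUniv_subset (j : Fin n) (F : MvPolynomial (Fin n) A) (k : ℕ) :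
    ((toUniv j F).coeff k).vars ⊆ F.vars.erase j := by
  classical
  intro v hv
  rw [coeff_toUniv] at hv
  obtain ⟨m, hm, hvm⟩ := Finset.mem_biUnion.mp (vars_sum_subset _ _ hv)
  obtain ⟨hmF, hmj⟩ := Finset.mem_filter.mp hm
  have hcoeff : F.coeff m ≠ 0 := mem_support_iff.mp hmF
  rw [vars_monomial hcoeff, Finsupp.mem_support_iff, Finsupp.tsub_apply] at hvm
  have hvj : v ≠ j := by
    rintro rfl
    simp [hmj] at hvm
  rw [Finsupp.single_eq_of_ne hvj] at hvm
  exact Finset.mem_erase.mpr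
    ⟨hvj, (mem_vars_iff_mem_support v).mpr ⟨m, hmF, Finsupp.mem_support_iff.mpr (by omega)⟩⟩

theorem coeff_coeff_toUniv (j : Fin n) (F : MvPolynomial (Fin n) A) {m : Fin n →₀ ℕ} :
    ((toUniv j F).coeff (m j)).coeff (m - Finsupp.single j (m j)) = F.coeff m := by
  classical
  have hinj : ∀ m' : Fin n →₀ ℕ, m' j = m j →
      m' - Finsupp.single j (m j) = m - Finsupp.single j (m j) → m' = m := by
    intro m' hj h
    ext v
    by_cases hv : v = j
    · rw [hv, hj]
    · simpa [Finsupp.single_eq_of_ne hv] using DFunLike.congr_fun h v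
  rw [coeff_toUniv, coeff_sum, Finset.sum_eq_single m]
  · rw [coeff_monomial, if_pos rfl]
  · intro m' hm' hne
    rw [coeff_monomial, if_neg fun h => hne (hinj m' (Finset.mem_filter.mp hm').2 h)]
  · intro hm
    rw [coeff_monomial, if_pos rfl]
    exact notMem_support_iff.mp fun hmF => hm (Finset.mem_filter.mpr ⟨hmF, rfl⟩)

theorem coeff_toUniv_degreeOf_ne_zero (j : Fin n) {F : MvPolynomial (Fin n) A} (hF : F ≠ 0) :
    (toUniv j F).coeff (F.degreeOf j) ≠ 0 := by
  obtain ⟨m, hmF, hmj⟩ :=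
    Finset.exists_mem_eq_sup F.support (support_nonempty.mpr hF) (fun m => m j)
  rw [degreeOf_eq_sup, hmj]
  intro h
  exact mem_support_iff.mp hmF (by rw [← coeff_coeff_toUniv j F, h, coeff_zero])

theorem degreeOf_pos_of_mem_vars {F : MvPolynomial (Fin n) A} {v : Fin n} (hv : v ∈ F.vars) :
    0 < F.degreeOf v := by
  obtain ⟨m, hmF, hvm⟩ := (mem_vars_iff_mem_support v).mp hv
  rw [degreeOf_eq_sup]
  exact (Nat.pos_of_ne_zero (Finsupp.mem_support_iff.mp hvm)).trans_le
    (Finset.le_sup (f := fun m => m v) hmF)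

end toUniv

section mainVar

variable [NeZero n]

theorem mainVar_eq_max' {F : MvPolynomial (Fin n) A} (h : F.vars.Nonempty) :
    mainVar F = F.vars.max' h := by
  rw [mainVar, ← Finset.coe_max' h, WithBot.unbotD_coe]

theorem mainVar_mem_vars {F : MvPolynomial (Fin n) A} (h : F.vars.Nonempty) :
    mainVar F ∈ F.vars := by
  rw [mainVar_eq_max' h]
  exact F.vars.max'_mem h

theorem le_mainVar {F : MvPolynomial (Fin n) A} {v : Fin n} (hv : v ∈ F.vars) :
    v ≤ mainVar F := by
  rw [mainVar_eq_max' ⟨v, hv⟩]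
  exact F.vars.le_max' v hv

theorem coeff_toUniv_mainVar_degreeOf (F : MvPolynomial (Fin n) A) :
    (toUniv (mainVar F) F).coeff (F.degreeOf (mainVar F)) = initial F := by
  rw [coeff_toUniv, initial]

theorem vars_initial_subset (F : MvPolynomial (Fin n) A) :
    (initial F).vars ⊆ F.vars.erase (mainVar F) := by
  rw [← coeff_toUniv_mainVar_degreeOf]
  exact vars_coeff_toUniv_subset _ _ _

theorem natDegree_toUniv_mainVar_pos {P : MvPolynomial (Fin n) A} (hP : P.vars.Nonempty) :
    0 < (toUniv (mainVar P) P).natDegree := by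
  have hP0 : P ≠ 0 := by rintro rfl; simp at hP
  exact (degreeOf_pos_of_mem_vars (mainVar_mem_vars hP)).trans_le
    (Polynomial.le_natDegree_of_ne_zero (coeff_toUniv_degreeOf_ne_zero _ hP0))

end mainVar

section resultant

theorem sylvester_eq_transpose_submatrix (f g : Polynomial A) :
    sylvester f g =
      ((Polynomial.sylvester f g f.natDegree g.natDegree).submatrix Fin.rev Fin.rev)ᵀ := by
  ext i j
  simp only [Matrix.transpose_apply, Matrix.submatrix_apply, Polynomial.sylvester,
    Matrix.of_apply]
  have hj := j.isLt
  induction h : Fin.rev i using Fin.addCases with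
  | left k =>
    rw [Fin.rev_eq_iff] at h
    subst h
    simp only [sylvester, Fin.addCases_left, Fin.val_rev, Fin.val_castAdd, Set.mem_Icc]
    split_ifs <;> first | omega | (congr 1 <;> omega)
  | right k =>
    rw [Fin.rev_eq_iff] at h
    subst h
    simp only [sylvester, Fin.addCases_right, Fin.val_rev, Fin.val_natAdd, Set.mem_Icc]
    split_ifs <;> first | omega | (congr 1 <;> omega)

theorem resultant_eq_polynomial_resultant (f g : Polynomial A) : resultant f g = f.resultant g := by
  rw [resultant, sylvester_eq_transpose_submatrix, Matrix.det_transpose]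
  exact Matrix.det_submatrix_equiv_self Fin.revPerm _

theorem det_mem_subalgebra {R B ι : Type*} [CommRing R] [CommRing B] [Algebra R B]
    [Fintype ι] [DecidableEq ι] {S : Subalgebra R B} (M : Matrix ι ι B) (h : ∀ i j, M i j ∈ S) :
    M.det ∈ S := by
  rw [Matrix.det_apply']
  exact Subalgebra.sum_mem S fun σ _ =>
    Subalgebra.mul_mem S (Subalgebra.intCast_mem S _) (Subalgebra.prod_mem S fun i _ => h _ _)

end resultant

section res1

variable [NeZero n]

theorem res1_mem_span (F : MvPolynomial (Fin n) A) {P : MvPolynomial (Fin n) A}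
    (hP : P.vars.Nonempty) : res1 F P ∈ Ideal.span {F, P} := by
  obtain ⟨p, q, -, -, h⟩ := Polynomial.exists_mul_add_mul_eq_C_resultant
    (toUniv (mainVar P) F) (toUniv (mainVar P) P) le_rfl le_rfl
    (Or.inr (natDegree_toUniv_mainVar_pos hP).ne')
  have h := congrArg (Polynomial.eval (X (mainVar P))) h
  rw [Polynomial.eval_add, Polynomial.eval_mul, Polynomial.eval_mul, Polynomial.eval_C,
    eval_X_toUniv, eval_X_toUniv] at h
  rw [res1, resultant_eq_polynomial_resultant, ← h, mul_comm F, mul_comm P]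
  exact Ideal.mem_span_pair.mpr ⟨_, _, rfl⟩

theorem vars_res1_subset (F P : MvPolynomial (Fin n) A) :
    (res1 F P).vars ⊆ (F.vars ∪ P.vars).erase (mainVar P) := by
  have hsupp : ∀ G, G.vars ⊆ F.vars ∪ P.vars → ∀ k, (toUniv (mainVar P) G).coeff k ∈
      supported A ((F.vars ∪ P.vars).erase (mainVar P) : Set (Fin n)) := fun G hG k =>
    mem_supported.mpr <| Finset.coe_subset.mpr <|
      (vars_coeff_toUniv_subset _ _ _).trans (Finset.erase_subset_erase _ hG)
  rw [← Finset.coe_subset, ← mem_supported, res1, resultant]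
  refine det_mem_subalgebra _ fun i j => ?_
  rw [sylvester]
  split_ifs
  · exact hsupp F Finset.subset_union_left _
  · exact Subalgebra.zero_mem _
  · exact hsupp P Finset.subset_union_right _
  · exact Subalgebra.zero_mem _

end res1

section sres

variable [NeZero n]

theorem sres_mem {I : Ideal (MvPolynomial (Fin n) A)} {F : MvPolynomial (Fin n) A}
    {l : List (MvPolynomial (Fin n) A)} (hl : ∀ P ∈ l, P.vars.Nonempty ∧ P ∈ I) (hF : F ∈ I) :
    sres F l ∈ I := by
  induction l generalizing F with
  | nil => exact hF
  | cons P l ih =>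
    obtain ⟨hPvars, hPI⟩ := hl P List.mem_cons_self
    refine ih (fun Q hQ => hl Q (List.mem_cons_of_mem _ hQ)) ?_
    refine (Ideal.span_le.mpr ?_) (res1_mem_span F hPvars)
    simp [Set.insert_subset_iff, hF, hPI]

theorem mem_vars_sres {l : List (MvPolynomial (Fin n) A)}
    (hl : l.Pairwise fun P Q => ∀ w ∈ Q.vars, w < mainVar P)
    {F : MvPolynomial (Fin n) A} {v : Fin n} (hv : v ∈ (sres F l).vars) :
    (v ∈ F.vars ∨ ∃ P ∈ l, v ∈ P.vars) ∧ ∀ P ∈ l, v ≠ mainVar P := by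
  induction l generalizing F with
  | nil => exact ⟨Or.inl hv, by simp⟩
  | cons P l ih =>
    obtain ⟨hP, hl⟩ := List.pairwise_cons.mp hl
    obtain ⟨hvars, hne⟩ := ih hl hv
    rcases hvars with hvF | ⟨Q, hQ, hvQ⟩
    · obtain ⟨hvP, hvFP⟩ := Finset.mem_erase.mp (vars_res1_subset F P hvF)
      refine ⟨?_, List.forall_mem_cons.mpr ⟨hvP, hne⟩⟩
      rcases Finset.mem_union.mp hvFP with h | h
      · exact Or.inl h
      · exact Or.inr ⟨P, List.mem_cons_self, h⟩
    · exact ⟨Or.inr ⟨Q, List.mem_cons_of_mem _ hQ, hvQ⟩,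
        List.forall_mem_cons.mpr ⟨(hP Q hQ v hvQ).ne, hne⟩⟩

end sres

theorem mem_take_reverse_ofFn {β : Type*} {r k : ℕ} (T : Fin r → β) {Q : β} :
    Q ∈ ((List.ofFn T).take k).reverse ↔ ∃ j : Fin r, (j : ℕ) < k ∧ T j = Q := by
  rw [List.mem_reverse, List.mem_take_iff_getElem]
  constructor
  · rintro ⟨i, hi, rfl⟩
    simp only [List.length_ofFn, lt_min_iff] at hi
    exact ⟨⟨i, hi.2⟩, hi.1, by simp⟩
  · rintro ⟨j, hj, rfl⟩
    exact ⟨j, by simp [hj], by simp⟩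

section triangular

variable [NeZero n] {r : ℕ} {T : Fin r → MvPolynomial (Fin n) A}

theorem IsTriangular.pairwise_take_reverse (hT : IsTriangular T) (k : ℕ) :
    ((List.ofFn T).take k).reverse.Pairwise fun P Q => ∀ w ∈ Q.vars, w < mainVar P := by
  rw [List.pairwise_reverse]
  refine (List.pairwise_ofFn.mpr fun i j hij w hw => ?_).sublist (List.take_sublist _ _)
  exact (le_mainVar hw).trans_lt (hT.2 hij)

theorem IsTriangular.ne_mainVar_of_mem_vars_sres (hT : IsTriangular T) {k : ℕ}
    {F : MvPolynomial (Fin n) A} (hF : ∀ v ∈ F.vars, ∀ i : Fin r, k ≤ i → v < mainVar (T i))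
    {v : Fin n} (hv : v ∈ (sres F ((List.ofFn T).take k).reverse).vars) (i : Fin r) :
    v ≠ mainVar (T i) := by
  obtain ⟨hvars, hne⟩ := mem_vars_sres (hT.pairwise_take_reverse k) hv
  rcases lt_or_ge (i : ℕ) k with hik | hki
  · exact hne (T i) ((mem_take_reverse_ofFn T).mpr ⟨i, hik, rfl⟩)
  · refine ne_of_lt ?_
    rcases hvars with hvF | ⟨P, hP, hvP⟩
    · exact hF v hvF i hki
    · obtain ⟨j, hjk, rfl⟩ := (mem_take_reverse_ofFn T).mp hP
      exact (le_mainVar hvP).trans_lt (hT.2 (show j < i by omega))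

theorem IsRegularChain.sres_initial_ne_zero (hT : IsRegularChain T) (i : Fin r) :
    sres (initial (T i)) ((List.ofFn T).take i).reverse ≠ 0 := by
  rcases Nat.eq_zero_or_pos i with hi | hi
  · simpa [hi, sres] using hT.2.1 i hi
  · exact hT.2.2 i hi

end triangular

section specialization

variable {Ω : Type*} [Field Ω]

theorem eval₂Hom_eq_of_vars (ι : MvPolynomial (Fin n) A →+* Ω) {x : Fin n → Ω}
    {q : MvPolynomial (Fin n) A} (hx : ∀ v ∈ q.vars, x v = ι (X v)) :
    eval₂Hom (ι.comp C) x q = ι q :=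
  hom_congr_vars (eval₂Hom_comp_C _ _) (fun v hv _ => by simpa using hx v hv) rfl

theorem eval₂Hom_update_of_notMem_vars (f : A →+* Ω) (x : Fin n → Ω) (ρ : Ω) {j : Fin n}
    {q : MvPolynomial (Fin n) A} (hj : j ∉ q.vars) :
    eval₂Hom f (Function.update x j ρ) q = eval₂Hom f x q :=
  eval₂Hom_congr' rfl (fun _ hv _ => Function.update_of_ne (ne_of_mem_of_not_mem hv hj) _ _) rfl

theorem eq_eval_map_toUniv {S : Type*} [CommRing S] (φ : MvPolynomial (Fin n) A →+* S)
    (j : Fin n) (F : MvPolynomial (Fin n) A) :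
    φ F = ((toUniv j F).map φ).eval (φ (X j)) := by
  conv_lhs => rw [← eval_X_toUniv j F, Polynomial.eval, Polynomial.hom_eval₂, RingHom.comp_id,
    ← Polynomial.eval_map]

theorem exists_update_eval₂Hom_eq_zero [NeZero n] [IsAlgClosed Ω] (f : A →+* Ω) (x : Fin n → Ω)
    {P : MvPolynomial (Fin n) A} (hP : P.vars.Nonempty) (hI : eval₂Hom f x (initial P) ≠ 0) :
    ∃ ρ, eval₂Hom f (Function.update x (mainVar P) ρ) P = 0 := by
  set q := (toUniv (mainVar P) P).map (eval₂Hom f x)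
  have hq : q.coeff (P.degreeOf (mainVar P)) ≠ 0 := by
    rwa [Polynomial.coeff_map, coeff_toUniv_mainVar_degreeOf]
  have hdeg : q.degree ≠ 0 :=
    (lt_of_lt_of_le (by exact_mod_cast degreeOf_pos_of_mem_vars (mainVar_mem_vars hP))
      (Polynomial.le_degree_of_ne_zero hq)).ne'
  obtain ⟨ρ, hρ⟩ := IsAlgClosed.exists_root q hdeg
  refine ⟨ρ, ?_⟩
  have hcoeff : (toUniv (mainVar P) P).map (eval₂Hom f (Function.update x (mainVar P) ρ)) = q := by
    ext k
    simp only [q, Polynomial.coeff_map]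
    exact eval₂Hom_update_of_notMem_vars f x ρ
      fun h => (Finset.mem_erase.mp (vars_coeff_toUniv_subset _ _ _ h)).1 rfl
  rw [eq_eval_map_toUniv _ (mainVar P), hcoeff, eval₂Hom_X', Function.update_self]
  exact hρ

end specialization

section regularChain

variable [NeZero n] {r : ℕ} {T : Fin r → MvPolynomial (Fin n) A}
  {Ω : Type*} [Field Ω] {ι : MvPolynomial (Fin n) A →+* Ω}

theorem IsTriangular.mainVar_notMem_vars (hT : IsTriangular T) {i j : Fin r} (hij : i < j) :
    mainVar (T j) ∉ (T i).vars :=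
  fun h => (le_mainVar h).not_gt (hT.2 hij)

theorem IsTriangular.eval₂Hom_ne_zero_of_sres_ne_zero (hT : IsTriangular T)
    (hι : Function.Injective ι) {x : Fin n → Ω}
    (hx : ∀ v, (∀ i, v ≠ mainVar (T i)) → x v = ι (X v)) {k : ℕ}
    (hzero : ∀ i : Fin r, (i : ℕ) < k → eval₂Hom (ι.comp C) x (T i) = 0)
    {F : MvPolynomial (Fin n) A} (hF : ∀ v ∈ F.vars, ∀ i : Fin r, k ≤ i → v < mainVar (T i))
    (hres : sres F ((List.ofFn T).take k).reverse ≠ 0) :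
    eval₂Hom (ι.comp C) x F ≠ 0 := by
  intro hF0
  have hker : sres F ((List.ofFn T).take k).reverse ∈ RingHom.ker (eval₂Hom (ι.comp C) x) := by
    refine sres_mem (fun P hP => ?_) hF0
    obtain ⟨i, hik, rfl⟩ := (mem_take_reverse_ofFn T).mp hP
    exact ⟨hT.1 i, hzero i hik⟩
  rw [RingHom.mem_ker,
    eval₂Hom_eq_of_vars ι fun v hv => hx v (hT.ne_mainVar_of_mem_vars_sres hF hv)] at hker
  exact hres ((map_eq_zero_iff ι hι).mp hker)

theorem IsRegularChain.exists_eval₂Hom_eq_zero [IsAlgClosed Ω] (hT : IsRegularChain T)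
    (hι : Function.Injective ι) :
    ∃ x : Fin n → Ω, (∀ v, (∀ i, v ≠ mainVar (T i)) → x v = ι (X v)) ∧
      ∀ i, eval₂Hom (ι.comp C) x (T i) = 0 ∧ eval₂Hom (ι.comp C) x (initial (T i)) ≠ 0 := by
  suffices h : ∀ k ≤ r, ∃ x : Fin n → Ω, (∀ v, (∀ i, v ≠ mainVar (T i)) → x v = ι (X v)) ∧
      ∀ i : Fin r, (i : ℕ) < k →
        eval₂Hom (ι.comp C) x (T i) = 0 ∧ eval₂Hom (ι.comp C) x (initial (T i)) ≠ 0 by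
    obtain ⟨x, hx, hzero⟩ := h r le_rfl
    exact ⟨x, hx, fun i => hzero i i.isLt⟩
  intro k
  induction k with
  | zero => exact fun _ => ⟨fun v => ι (X v), fun _ _ => rfl, fun i hi => absurd hi (by omega)⟩
  | succ k ih =>
    intro hk
    obtain ⟨x, hx, hzero⟩ := ih (by omega)
    set t : Fin r := ⟨k, hk⟩
    have hI : eval₂Hom (ι.comp C) x (initial (T t)) ≠ 0 := by
      refine hT.1.eval₂Hom_ne_zero_of_sres_ne_zero hι hx (fun i hi => (hzero i hi).1)
        (fun v hv i hi => ?_) (hT.sres_initial_ne_zero t)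
      obtain ⟨hvt, hvT⟩ := Finset.mem_erase.mp (vars_initial_subset _ hv)
      exact ((le_mainVar hvT).lt_of_ne hvt).trans_le (hT.1.2.monotone (show t ≤ i from hi))
    obtain ⟨ρ, hρ⟩ := exists_update_eval₂Hom_eq_zero _ x (hT.1.1 t) hI
    refine ⟨Function.update x (mainVar (T t)) ρ,
      fun v hv => (Function.update_of_ne (hv t) _ _).trans (hx v hv), fun i hi => ?_⟩
    rcases (Nat.lt_succ_iff_lt_or_eq.mp hi) with hik | hik
    · have hit : i < t := hik
      rw [eval₂Hom_update_of_notMem_vars _ _ _ (hT.1.mainVar_notMem_vars hit),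
        eval₂Hom_update_of_notMem_vars _ _ _
          fun h => hT.1.mainVar_notMem_vars hit (Finset.mem_of_mem_erase (vars_initial_subset _ h))]
      exact hzero i hik
    · obtain rfl : i = t := Fin.ext hik
      rw [eval₂Hom_update_of_notMem_vars _ _ _
        fun h => (Finset.mem_erase.mp (vars_initial_subset _ h)).1 rfl]
      exact ⟨hρ, hI⟩

end regularChain

theorem algebraMap_algebraicClosure_fractionRing_injective (R : Type*) [CommRing R] [IsDomain R] :
    Function.Injective (algebraMap R (AlgebraicClosure (FractionRing R))) := by
  rw [IsScalarTower.algebraMap_eq R (FractionRing R), RingHom.coe_comp]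
  exact (algebraMap (FractionRing R) _).injective.comp (IsFractionRing.injective R _)

/-- For a regular chain `T` in `K[U][X]`, if the successive resultant
`res(F, T) ≠ 0` then `F` is not in the saturated ideal `sat(T) = {G : I_T^s·G ∈ ⟨T⟩}`. -/
theorem stmt19 [NeZero n] {r : ℕ}
    (T : Fin r → MvPolynomial (Fin n) (MvPolynomial (Fin d) K))
    (hT : IsRegularChain T)
    (F : MvPolynomial (Fin n) (MvPolynomial (Fin d) K))
    (hres : sres F (List.ofFn T).reverse ≠ 0) :
    ¬ ∃ s : ℕ, (∏ i, initial (T i)) ^ s * F ∈ Ideal.span (Set.range T) := by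
  rintro ⟨s, hmem⟩
  set ι := algebraMap (MvPolynomial (Fin n) (MvPolynomial (Fin d) K))
    (AlgebraicClosure (FractionRing (MvPolynomial (Fin n) (MvPolynomial (Fin d) K))))
  have hι : Function.Injective ι := algebraMap_algebraicClosure_fractionRing_injective _
  obtain ⟨x, hx, hTx⟩ := hT.exists_eval₂Hom_eq_zero hι
  have hF : eval₂Hom (ι.comp C) x F ≠ 0 :=
    hT.1.eval₂Hom_ne_zero_of_sres_ne_zero hι hx (k := r) (fun i _ => (hTx i).1)
      (fun _ _ i hi => absurd i.isLt (not_lt.mpr hi))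
      (by rwa [List.take_of_length_le (by simp)])
  have hker : Ideal.span (Set.range T) ≤ RingHom.ker (eval₂Hom (ι.comp C) x) :=
    Ideal.span_le.mpr (Set.range_subset_iff.mpr fun i => (hTx i).1)
  have h := hker hmem
  rw [RingHom.mem_ker, map_mul, map_pow, map_prod] at h
  exact mul_ne_zero (pow_ne_zero _ (Finset.prod_ne_zero_iff.mpr fun i _ => (hTx i).2)) hF h

end
end
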